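/- Full (infinite) frequency L∞ bound via LMI (sufficiency direction of Theorem 5): Let 0 < ν < 2, φ = (π/2)(ν−1), δ > 0, and let A ∈ ℝ^{n×n}, B ∈ ℝ^{n×m}, C ∈ ℝ^{p×n}, D ∈ ℝ^{p×m}. Suppose there exists a Hermitian matrix U ∈ ℂ^{n×n} such that, with X = e^{iφ}AᵀU and Y = e^{iφ}BᵀU, the Hermitian block matrix [[Sym(X), Y*, Cᵀ],[Y, −δI_m, Dᵀ],[C, D, −δI_p]] is negative definite. Then σmax(D) < δ, and for every ω ≥ 0 the matrix ω^ν e^{iπν/2} I_n − A is invertible and σmax(C(ω^ν e^{iπν/2} I_n − A)^{−1}B + D) < δ. -/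

import Mathlib

open Matrix Complex
open scoped Matrix Kronecker ComplexOrder

/-- The largest singular value (ℓ² operator norm) of a complex matrix. -/
noncomputable def sigmaMax {m n : ℕ} (M : Matrix (Fin m) (Fin n) ℂ) : ℝ :=
  ‖LinearMap.toContinuousLinearMap (Matrix.toEuclideanLin M)‖

/-- A real matrix regarded as a complex matrix. -/
noncomputable def cmap {a b : ℕ} (M : Matrix (Fin a) (Fin b) ℝ) : Matrix (Fin a) (Fin b) ℂ :=
  M.map Complex.ofReal

/-- ρ(θ, M) = [θ,1]* M [θ,1], real-valued for Hermitian M. -/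
noncomputable def rho (θ : ℂ) (M : Matrix (Fin 2) (Fin 2) ℂ) : ℝ :=
  (star ![θ, 1] ⬝ᵥ M *ᵥ ![θ, 1]).re

/-- Δ₀ = [[0, e^{iφ}],[e^{−iφ}, 0]]. -/
noncomputable def Delta0 (φ : ℝ) : Matrix (Fin 2) (Fin 2) ℂ :=
  !![0, Complex.exp ((φ : ℂ) * Complex.I);
     Complex.exp (-(φ : ℂ) * Complex.I), 0]

/-- Σ₀ = [[α, β e^{iφ}],[β e^{−iφ}, γ]]. -/
noncomputable def Sigma0 (φ α β γ : ℝ) : Matrix (Fin 2) (Fin 2) ℂ :=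
  !![(α : ℂ), (β : ℂ) * Complex.exp ((φ : ℂ) * Complex.I);
     (β : ℂ) * Complex.exp (-(φ : ℂ) * Complex.I), (γ : ℂ)]

/-- A 3×3 block matrix. -/
noncomputable def block3 {n m p : ℕ}
    (A11 : Matrix (Fin n) (Fin n) ℂ) (A12 : Matrix (Fin n) (Fin m) ℂ)
    (A13 : Matrix (Fin n) (Fin p) ℂ)
    (A21 : Matrix (Fin m) (Fin n) ℂ) (A22 : Matrix (Fin m) (Fin m) ℂ)
    (A23 : Matrix (Fin m) (Fin p) ℂ)
    (A31 : Matrix (Fin p) (Fin n) ℂ) (A32 : Matrix (Fin p) (Fin m) ℂ)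
    (A33 : Matrix (Fin p) (Fin p) ℂ) :
    Matrix ((Fin n ⊕ Fin m) ⊕ Fin p) ((Fin n ⊕ Fin m) ⊕ Fin p) ℂ :=
  Matrix.fromBlocks (Matrix.fromBlocks A11 A12 A21 A22)
    (Matrix.fromRows A13 A23) (Matrix.fromCols A31 A32) A33

/-!
Negative definiteness of the LMI, tested on `(x, u, (Cx + Du)/δ)`, gives
`Re S(x, u) + ‖Cx + Du‖²/δ < δ‖u‖²`, where `S(x, u) = 2 Re(e^{iφ} (Ax + Bu)* U x)` is the
storage term. Along the frequency response `Ax + Bu = s x`, `s = ω^ν e^{iπν/2}`, it equals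
`2 Re(e^{iφ} s̄ · x*Ux) = 2 ω^ν Re(-i · x*Ux) = 0` because `x*Ux` is real. Hence
`‖G(iω)u‖ < δ‖u‖`; taking `u = 0` excludes eigenvectors of `A` at `s`, and `x = 0` bounds `D`.
-/

open WithLp ComplexConjugate

theorem ContinuousLinearMap.opNorm_lt_of_forall_norm_apply_lt {𝕜 E F : Type*}
    [DenselyNormedField 𝕜] [NormedAddCommGroup E] [NormedSpace 𝕜 E] [ProperSpace E]
    [NormedAddCommGroup F] [NormedSpace 𝕜 F] (f : E →L[𝕜] F) {δ : ℝ} (hδ : 0 < δ)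
    (h : ∀ x ≠ 0, ‖f x‖ < δ * ‖x‖) : ‖f‖ < δ := by
  rw [← f.sSup_unitClosedBall_eq_norm, (isCompact_closedBall 0 1).sSup_lt_iff_of_continuous
    ⟨0, Metric.mem_closedBall_self zero_le_one⟩ (by fun_prop)]
  intro x hx
  rcases eq_or_ne x 0 with rfl | hx0
  · simpa using hδ
  · calc ‖f x‖ < δ * ‖x‖ := h x hx0
      _ ≤ δ := mul_le_of_le_one_right hδ.le (mem_closedBall_zero_iff.1 hx)

theorem norm_toLp_sq {ι : Type*} [Fintype ι] (v : ι → ℂ) :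
    ‖toLp 2 v‖ ^ 2 = (star v ⬝ᵥ v).re := by
  rw [@norm_sq_eq_re_inner ℂ, EuclideanSpace.inner_toLp_toLp, dotProduct_comm]
  rfl

theorem sigmaMax_lt_of_forall_norm_mulVec_lt {a b : ℕ} (M : Matrix (Fin a) (Fin b) ℂ) {δ : ℝ}
    (hδ : 0 < δ) (h : ∀ u ≠ 0, ‖toLp 2 (M *ᵥ u)‖ < δ * ‖toLp 2 u‖) : sigmaMax M < δ :=
  ContinuousLinearMap.opNorm_lt_of_forall_norm_apply_lt _ hδ fun x hx =>
    h (ofLp x) ((WithLp.ofLp_eq_zero 2).ne.2 hx)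

theorem star_dotProduct_conjTranspose_mulVec {ι κ : Type*} [Fintype ι] [Fintype κ]
    (M : Matrix ι κ ℂ) (x : κ → ℂ) (z : ι → ℂ) :
    star x ⬝ᵥ Mᴴ *ᵥ z = star (M *ᵥ x) ⬝ᵥ z := by
  rw [dotProduct_mulVec, ← star_mulVec]

theorem cmap_conjTranspose {a b : ℕ} (M : Matrix (Fin a) (Fin b) ℝ) : (cmap M)ᴴ = (cmap M)ᵀ := by
  ext i j
  simp [cmap]

theorem re_exp_mul_conj_ofReal_mul_exp (r θ : ℝ) :
    (exp ((θ - Real.pi / 2 : ℝ) * I) * conj ((r : ℂ) * exp ((θ : ℂ) * I))).re = 0 := by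
  rw [map_mul, conj_ofReal, ← exp_conj, map_mul, conj_I, conj_ofReal, mul_left_comm,
    ← exp_add]
  have hphase : ((θ - Real.pi / 2 : ℝ) : ℂ) * I + θ * -I = ((-(Real.pi / 2) : ℝ) : ℂ) * I := by
    push_cast; ring
  rw [hphase, re_ofReal_mul, exp_ofReal_mul_I_re, Real.cos_neg, Real.cos_pi_div_two, mul_zero]

theorem re_storage_eq_zero {ι κ : Type*} [Fintype ι] [Fintype κ] {A : Matrix ι ι ℂ}
    {B : Matrix ι κ ℂ} {U : Matrix ι ι ℂ} (hU : U.IsHermitian) {c s : ℂ}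
    (hcs : (c * conj s).re = 0) {x : ι → ℂ} {u : κ → ℂ} (hrel : A *ᵥ x + B *ᵥ u = s • x) :
    (star x ⬝ᵥ (c • (Aᴴ * U) + (c • (Aᴴ * U))ᴴ) *ᵥ x + star x ⬝ᵥ (c • (Bᴴ * U))ᴴ *ᵥ u +
      star u ⬝ᵥ (c • (Bᴴ * U)) *ᵥ x).re = 0 := by
  set q := star x ⬝ᵥ (c • (Aᴴ * U)) *ᵥ x + star u ⬝ᵥ (c • (Bᴴ * U)) *ᵥ x
  have hq : q = c * conj s * (star x ⬝ᵥ U *ᵥ x) := by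
    simp only [q, smul_mulVec, dotProduct_smul, ← mulVec_mulVec,
      star_dotProduct_conjTranspose_mulVec, smul_eq_mul, ← mul_add, ← add_dotProduct, ← star_add,
      hrel, star_smul, smul_dotProduct, Complex.star_def]
    ring
  have hsum : star x ⬝ᵥ (c • (Aᴴ * U) + (c • (Aᴴ * U))ᴴ) *ᵥ x +
      star x ⬝ᵥ (c • (Bᴴ * U))ᴴ *ᵥ u + star u ⬝ᵥ (c • (Bᴴ * U)) *ᵥ x = q + star q := by
    simp only [q, add_mulVec, dotProduct_add, star_add, star_dotProduct_conjTranspose_mulVec]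
    rw [star_dotProduct (v := (c • (Aᴴ * U)) *ᵥ x), star_dotProduct (v := (c • (Bᴴ * U)) *ᵥ x)]
    ring
  have hreal : (star x ⬝ᵥ U *ᵥ x).im = 0 := hU.im_star_dotProduct_mulVec_self x
  rw [hsum, add_re, Complex.star_def, conj_re, hq, mul_re, hcs, hreal]
  ring

theorem star_dotProduct_block3_mulVec {n m p : ℕ} (P : Matrix (Fin n) (Fin n) ℂ)
    (Y : Matrix (Fin m) (Fin n) ℂ) (Q : Matrix (Fin m) (Fin m) ℂ) (C : Matrix (Fin p) (Fin n) ℂ)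
    (D : Matrix (Fin p) (Fin m) ℂ) (R : Matrix (Fin p) (Fin p) ℂ)
    (x : Fin n → ℂ) (u : Fin m → ℂ) (z : Fin p → ℂ) :
    star (Sum.elim (Sum.elim x u) z) ⬝ᵥ block3 P Yᴴ Cᴴ Y Q Dᴴ C D R *ᵥ Sum.elim (Sum.elim x u) z =
      (star x ⬝ᵥ P *ᵥ x + star x ⬝ᵥ Yᴴ *ᵥ u + star u ⬝ᵥ Y *ᵥ x) + star u ⬝ᵥ Q *ᵥ u +
        (star (C *ᵥ x + D *ᵥ u) ⬝ᵥ z + star z ⬝ᵥ (C *ᵥ x + D *ᵥ u)) + star z ⬝ᵥ R *ᵥ z := by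
  simp only [block3, Function.star_sumElim, fromBlocks_mulVec, fromRows_mulVec,
    fromCols_mulVec_sumElim, sumElim_dotProduct_sumElim, dotProduct_add, add_dotProduct,
    Sum.elim_add_add, Sum.elim_comp_inl, Sum.elim_comp_inr, star_add,
    star_dotProduct_conjTranspose_mulVec]
  ring

section FrequencyResponse

variable {n m p : ℕ} {δ : ℝ} {P : Matrix (Fin n) (Fin n) ℂ} {Y : Matrix (Fin m) (Fin n) ℂ}
  {A : Matrix (Fin n) (Fin n) ℂ} {B : Matrix (Fin n) (Fin m) ℂ}
  {C : Matrix (Fin p) (Fin n) ℂ} {D : Matrix (Fin p) (Fin m) ℂ} {s : ℂ}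

theorem norm_mulVec_add_lt_of_posDef_neg_block3 (hδ : 0 < δ)
    (hLMI : (-(block3 P Yᴴ Cᴴ Y (-(δ : ℂ) • 1) Dᴴ C D (-(δ : ℂ) • 1))).PosDef)
    {x : Fin n → ℂ} {u : Fin m → ℂ} (hxu : x ≠ 0 ∨ u ≠ 0)
    (hS : (star x ⬝ᵥ P *ᵥ x + star x ⬝ᵥ Yᴴ *ᵥ u + star u ⬝ᵥ Y *ᵥ x).re = 0) :
    ‖toLp 2 (C *ᵥ x + D *ᵥ u)‖ < δ * ‖toLp 2 u‖ := by
  set w := C *ᵥ x + D *ᵥ u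
  set v : (Fin n ⊕ Fin m) ⊕ Fin p → ℂ := Sum.elim (Sum.elim x u) (((δ⁻¹ : ℝ) : ℂ) • w)
  have hv : v ≠ 0 := by
    intro hv0
    rcases hxu with hx | hu
    · exact hx (funext fun i => congrFun hv0 (Sum.inl (Sum.inl i)))
    · exact hu (funext fun i => congrFun hv0 (Sum.inl (Sum.inr i)))
  have hform : star v ⬝ᵥ block3 P Yᴴ Cᴴ Y (-(δ : ℂ) • 1) Dᴴ C D (-(δ : ℂ) • 1) *ᵥ v =
      (star x ⬝ᵥ P *ᵥ x + star x ⬝ᵥ Yᴴ *ᵥ u + star u ⬝ᵥ Y *ᵥ x) +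
        ((δ⁻¹ : ℝ) : ℂ) * (star w ⬝ᵥ w) - (δ : ℂ) * (star u ⬝ᵥ u) := by
    rw [star_dotProduct_block3_mulVec]
    simp only [star_smul, smul_dotProduct, dotProduct_smul, smul_mulVec, one_mulVec,
      smul_eq_mul, Complex.star_def, conj_ofReal]
    have hδ' : (δ : ℂ) ≠ 0 := by exact_mod_cast hδ.ne'
    push_cast
    field_simp
    ring
  have hneg := (hLMI.dotProduct_mulVec_pos hv).1
  rw [neg_mulVec, dotProduct_neg, hform] at hneg
  simp only [neg_re, sub_re, add_re, hS, re_ofReal_mul, zero_re, ← norm_toLp_sq] at hneg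
  have hsq : ‖toLp 2 w‖ ^ 2 < (δ * ‖toLp 2 u‖) ^ 2 := by
    have h := mul_lt_mul_of_pos_left (show δ⁻¹ * ‖toLp 2 w‖ ^ 2 < δ * ‖toLp 2 u‖ ^ 2 by linarith) hδ
    rwa [← mul_assoc, mul_inv_cancel₀ hδ.ne', one_mul, ← mul_assoc, ← sq, ← mul_pow] at h
  exact lt_of_pow_lt_pow_left₀ 2 (by positivity) hsq

theorem isUnit_smul_one_sub_of_posDef_neg_block3 (hδ : 0 < δ)
    (hLMI : (-(block3 P Yᴴ Cᴴ Y (-(δ : ℂ) • 1) Dᴴ C D (-(δ : ℂ) • 1))).PosDef)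
    (hS : ∀ x u, A *ᵥ x + B *ᵥ u = s • x →
      (star x ⬝ᵥ P *ᵥ x + star x ⬝ᵥ Yᴴ *ᵥ u + star u ⬝ᵥ Y *ᵥ x).re = 0) :
    IsUnit (s • 1 - A) := by
  rw [isUnit_iff_isUnit_det, isUnit_iff_ne_zero]
  intro hdet
  obtain ⟨x, hx, hker⟩ := exists_mulVec_eq_zero_iff.mpr hdet
  have hrel : A *ᵥ x + B *ᵥ 0 = s • x := by
    rw [sub_mulVec, smul_mulVec, one_mulVec, sub_eq_zero] at hker
    rw [mulVec_zero, add_zero, hker]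
  have h := norm_mulVec_add_lt_of_posDef_neg_block3 hδ hLMI (Or.inl hx) (hS x 0 hrel)
  simp only [WithLp.toLp_zero, norm_zero, mul_zero] at h
  exact (norm_nonneg _).not_gt h

theorem norm_transfer_mulVec_lt_of_posDef_neg_block3 (hδ : 0 < δ)
    (hLMI : (-(block3 P Yᴴ Cᴴ Y (-(δ : ℂ) • 1) Dᴴ C D (-(δ : ℂ) • 1))).PosDef)
    (hS : ∀ x u, A *ᵥ x + B *ᵥ u = s • x →
      (star x ⬝ᵥ P *ᵥ x + star x ⬝ᵥ Yᴴ *ᵥ u + star u ⬝ᵥ Y *ᵥ x).re = 0)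
    {u : Fin m → ℂ} (hu : u ≠ 0) :
    ‖toLp 2 ((C * (s • 1 - A)⁻¹ * B + D) *ᵥ u)‖ < δ * ‖toLp 2 u‖ := by
  have hdet := (isUnit_iff_isUnit_det _).mp (isUnit_smul_one_sub_of_posDef_neg_block3 hδ hLMI hS)
  set x := (s • 1 - A)⁻¹ *ᵥ (B *ᵥ u)
  have hrel : A *ᵥ x + B *ᵥ u = s • x := by
    have hx : (s • 1 - A) *ᵥ x = B *ᵥ u := by
      rw [mulVec_mulVec, mul_nonsing_inv _ hdet, one_mulVec]
    rw [← hx, sub_mulVec, smul_mulVec, one_mulVec]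
    abel
  rw [add_mulVec, ← mulVec_mulVec, ← mulVec_mulVec]
  exact norm_mulVec_add_lt_of_posDef_neg_block3 hδ hLMI (Or.inr hu) (hS x u hrel)

end FrequencyResponse

theorem fos_Linf_infinite_frequency_general {n m p : ℕ} (ν φ δ : ℝ)
    (hφ : φ = (Real.pi / 2) * (ν - 1)) (hδ : 0 < δ)
    (A : Matrix (Fin n) (Fin n) ℝ) (B : Matrix (Fin n) (Fin m) ℝ)
    (C : Matrix (Fin p) (Fin n) ℝ) (D : Matrix (Fin p) (Fin m) ℝ)
    (U : Matrix (Fin n) (Fin n) ℂ) (hU : U.IsHermitian)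
    (X : Matrix (Fin n) (Fin n) ℂ) (Y : Matrix (Fin m) (Fin n) ℂ)
    (hX : X = Complex.exp ((φ : ℂ) * Complex.I) • ((cmap A)ᵀ * U))
    (hY : Y = Complex.exp ((φ : ℂ) * Complex.I) • ((cmap B)ᵀ * U))
    (hLMI : (-(block3
      (X + Xᴴ) Yᴴ (cmap C)ᵀ
      Y (-(δ : ℂ) • 1) (cmap D)ᵀ
      (cmap C) (cmap D) (-(δ : ℂ) • 1))).PosDef) :
    sigmaMax (cmap D) < δ ∧
    ∀ ω : ℝ, 0 ≤ ω →
      IsUnit ((((ω ^ ν : ℝ) : ℂ) * Complex.exp ((Real.pi * ν / 2 : ℝ) * Complex.I)) •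
          (1 : Matrix (Fin n) (Fin n) ℂ) - cmap A) ∧
      sigmaMax (cmap C *
        ((((ω ^ ν : ℝ) : ℂ) * Complex.exp ((Real.pi * ν / 2 : ℝ) * Complex.I)) •
          (1 : Matrix (Fin n) (Fin n) ℂ) - cmap A)⁻¹ * cmap B + cmap D) < δ := by
  obtain rfl : φ = Real.pi * ν / 2 - Real.pi / 2 := by rw [hφ]; ring
  subst hX hY
  simp only [← cmap_conjTranspose] at hLMI
  refine ⟨sigmaMax_lt_of_forall_norm_mulVec_lt _ hδ fun u hu => ?_, fun ω _ => ?_⟩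
  · simpa using norm_mulVec_add_lt_of_posDef_neg_block3 hδ hLMI (x := 0) (Or.inr hu) (by simp)
  · have hS := fun x u (hrel : cmap A *ᵥ x + cmap B *ᵥ u = _) =>
      re_storage_eq_zero hU (re_exp_mul_conj_ofReal_mul_exp (ω ^ ν) (Real.pi * ν / 2)) hrel
    exact ⟨isUnit_smul_one_sub_of_posDef_neg_block3 hδ hLMI hS,
      sigmaMax_lt_of_forall_norm_mulVec_lt _ hδ fun u hu =>
        norm_transfer_mulVec_lt_of_posDef_neg_block3 hδ hLMI hS hu⟩

/-- Full (infinite) frequency L∞ bound via LMI (sufficiency direction of Theorem 5). -/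
theorem fos_Linf_infinite_frequency {n m p : ℕ} (ν φ δ : ℝ)
    (hν : 0 < ν) (hν2 : ν < 2) (hφ : φ = (Real.pi / 2) * (ν - 1)) (hδ : 0 < δ)
    (A : Matrix (Fin n) (Fin n) ℝ) (B : Matrix (Fin n) (Fin m) ℝ)
    (C : Matrix (Fin p) (Fin n) ℝ) (D : Matrix (Fin p) (Fin m) ℝ)
    (U : Matrix (Fin n) (Fin n) ℂ) (hU : U.IsHermitian)
    (X : Matrix (Fin n) (Fin n) ℂ) (Y : Matrix (Fin m) (Fin n) ℂ)
    (hX : X = Complex.exp ((φ : ℂ) * Complex.I) • ((cmap A)ᵀ * U))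
    (hY : Y = Complex.exp ((φ : ℂ) * Complex.I) • ((cmap B)ᵀ * U))
    (hLMI : (-(block3
      (X + Xᴴ) Yᴴ (cmap C)ᵀ
      Y (-(δ : ℂ) • 1) (cmap D)ᵀ
      (cmap C) (cmap D) (-(δ : ℂ) • 1))).PosDef) :
    sigmaMax (cmap D) < δ ∧
    ∀ ω : ℝ, 0 ≤ ω →
      IsUnit ((((ω ^ ν : ℝ) : ℂ) * Complex.exp ((Real.pi * ν / 2 : ℝ) * Complex.I)) •
          (1 : Matrix (Fin n) (Fin n) ℂ) - cmap A) ∧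
      sigmaMax (cmap C *
        ((((ω ^ ν : ℝ) : ℂ) * Complex.exp ((Real.pi * ν / 2 : ℝ) * Complex.I)) •
          (1 : Matrix (Fin n) (Fin n) ℂ) - cmap A)⁻¹ * cmap B + cmap D) < δ :=
  fos_Linf_infinite_frequency_general ν φ δ hφ hδ A B C D U hU X Y hX hY hLMI
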